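/- arXiv:0706.0908 — 7 statements merged into one kernel-verified Lean document; each statement's English description precedes it below -/
import Mathlib

section
/- Let $\hat{\nu}$ be a holonomic probability on $[0,1]\times\Sigma$, let $\pi(x,w)=x$ and $\nu=\pi_*\hat{\nu}$. Suppose $(\hat{\nu}_y)_{y\in[0,1]}$ is a family of Borel probability measures on $[0,1]\times\Sigma$ such that $y\mapsto\hat{\nu}_y(A)$ is Borel measurable for every Borel set $A$, $\hat{\nu}_y\big(([0,1]\setminus\{y\})\times\Sigma\big)=0$ for $\nu$-a.e. $y$, and $\int g\,d\hat{\nu}=\int_{[0,1]}\int g\,d\hat{\nu}_y\,d\nu(y)$ for every bounded Borel $g:[0,1]\times\Sigma\to\mathbb{R}$. Define $u_i(y)=\hat{\nu}_y(\{y\}\times[i])$ for $i=0,\dots,d-1$, where $[i]=\{w\in\Sigma: w_1=i\}$. Then $\sum_{i=0}^{d-1}u_i(y)=1$ for $\nu$-a.e. $y$, and $\nu$ is $P_u$-invariant: $\int \sum_{i=0}^{d-1}u_i(y)f(\tau_i(y))\,d\nu(y)=\int f\,d\nu$ for every continuous $f:[0,1]\to\mathbb{R}$. -/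
open MeasureTheory

noncomputable section

/-- A probability on `[0,1] × Σ` is holonomic. -/
def IsHolonomic {d : ℕ} (τ : Fin d → unitInterval → unitInterval)
    (ν : Measure (unitInterval × (ℕ → Fin d))) : Prop :=
  ∀ f : C(unitInterval, ℝ), (∫ p, f (τ (p.2 0) p.1) ∂ν) = ∫ p, f p.1 ∂ν

/-!
On the fibre `{y} × Σ` the integrand `f (τ_{w₁} x)` only depends on the first letter `w₁`,
so integrating it against the fibre measure `ν̂_y` gives `∑ᵢ uᵢ(y) f (τᵢ y)`; with `f = 1` this is
`∑ᵢ uᵢ(y) = 1`. Integrating over `ν` and using the disintegration and holonomy of `ν̂` gives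
`∫ P_u f dν = ∫ f(τ_{w₁} x) dν̂ = ∫ f(x) dν̂ = ∫ f dν`.
-/

section Fibre

variable {X Y ι : Type*} [MeasurableSpace X] [MeasurableSpace Y]
  [Fintype ι] [MeasurableSpace ι] [MeasurableSingletonClass ι]

theorem ae_fst_eq_of_measure_compl_prod_univ_eq_zero {μ : Measure (X × Y)} {y : X}
    (h : μ (({y}ᶜ : Set X) ×ˢ (Set.univ : Set Y)) = 0) : ∀ᵐ p ∂μ, p.1 = y := by
  rw [ae_iff]
  convert h using 2
  ext p
  simp

theorem integral_comp_fst_snd_of_ae_fst_eq (μ : Measure (X × Y)) [IsFiniteMeasure μ]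
    {φ : Y → ι} (hφ : Measurable φ) {y : X} (hy : ∀ᵐ p ∂μ, p.1 = y) (F : ι → X → ℝ) :
    ∫ p, F (φ p.2) p.1 ∂μ = ∑ i, μ.real ({y} ×ˢ {w | φ w = i}) * F i y := by
  have hφ₂ : Measurable fun p : X × Y => φ p.2 := hφ.comp measurable_snd
  have hslice : ∀ i, ({y} ×ˢ {w | φ w = i} : Set (X × Y)) =ᵐ[μ] {p | φ p.2 = i} := by
    intro i
    rw [Filter.eventuallyEq_set]
    filter_upwards [hy] with p hp
    simp [hp]
  calc ∫ p, F (φ p.2) p.1 ∂μ = ∫ p, F (φ p.2) y ∂μ :=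
        integral_congr_ae (by filter_upwards [hy] with p hp; rw [hp])
    _ = ∫ i, F i y ∂(μ.map fun p => φ p.2) :=
        (integral_map hφ₂.aemeasurable
          (measurable_of_finite fun i => F i y).aestronglyMeasurable).symm
    _ = ∑ i, μ.real ({y} ×ˢ {w | φ w = i}) * F i y := by
        rw [integral_fintype (.of_finite)]
        refine Finset.sum_congr rfl fun i _ => ?_
        rw [map_measureReal_apply hφ₂ (measurableSet_singleton i), measureReal_congr (hslice i)]
        rfl

end Fibre

theorem stmt1_general {d : ℕ} (τ : Fin d → unitInterval → unitInterval)
    (hτ : ∀ i, Continuous (τ i))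
    (nuhat : Measure (unitInterval × (ℕ → Fin d)))
    (hhol : IsHolonomic τ nuhat)
    (ν : Measure unitInterval) (hν : ν = Measure.map Prod.fst nuhat)
    (m : unitInterval → Measure (unitInterval × (ℕ → Fin d)))
    (hprob : ∀ y, IsProbabilityMeasure (m y))
    (hsupp : ∀ᵐ y ∂ν,
      m y ((({y} : Set unitInterval)ᶜ) ×ˢ (Set.univ : Set (ℕ → Fin d))) = 0)
    (hdisint : ∀ g : unitInterval × (ℕ → Fin d) → ℝ, Measurable g →
      (∃ C : ℝ, ∀ p, |g p| ≤ C) →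
      ∫ p, g p ∂nuhat = ∫ y, (∫ p, g p ∂(m y)) ∂ν) :
    (∀ᵐ y ∂ν, ∑ i : Fin d,
        (m y (({y} : Set unitInterval) ×ˢ {w : ℕ → Fin d | w 0 = i})).toReal = 1) ∧
    ∀ f : C(unitInterval, ℝ),
      (∫ y, ∑ i : Fin d,
        (m y (({y} : Set unitInterval) ×ˢ {w : ℕ → Fin d | w 0 = i})).toReal
          * f (τ i y) ∂ν)
      = ∫ y, f y ∂ν := by
  have hfibre (F : Fin d → unitInterval → ℝ) : ∀ᵐ y ∂ν, ∫ p, F (p.2 0) p.1 ∂(m y) =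
      ∑ i : Fin d, (m y ({y} ×ˢ {w : ℕ → Fin d | w 0 = i})).toReal * F i y := by
    filter_upwards [hsupp] with y hy
    exact integral_comp_fst_snd_of_ae_fst_eq (m y) (measurable_pi_apply 0)
      (ae_fst_eq_of_measure_compl_prod_univ_eq_zero hy) F
  refine ⟨?_, fun f => ?_⟩
  · filter_upwards [hfibre fun _ _ => 1] with y hy
    simpa using hy.symm
  · have hmeas : Measurable fun p : unitInterval × (ℕ → Fin d) => f (τ (p.2 0) p.1) := by
      have : Measurable fun q : Fin d × unitInterval => f (τ q.1 q.2) :=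
        measurable_from_prod_countable_right fun i => (f.continuous.comp (hτ i)).measurable
      exact this.comp (f := fun p : unitInterval × (ℕ → Fin d) => (p.2 0, p.1)) (by fun_prop)
    have hbdd : ∃ C, ∀ p : unitInterval × (ℕ → Fin d), |f (τ (p.2 0) p.1)| ≤ C :=
      ⟨‖f‖, fun p => f.norm_coe_le_norm _⟩
    calc _ = ∫ y, ∫ p, f (τ (p.2 0) p.1) ∂(m y) ∂ν :=
          integral_congr_ae ((hfibre fun i x => f (τ i x)).mono fun _ h => h.symm)
      _ = ∫ p, f (τ (p.2 0) p.1) ∂nuhat := (hdisint _ hmeas hbdd).symm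
      _ = ∫ p, f p.1 ∂nuhat := hhol f
      _ = ∫ y, f y ∂ν := by
        rw [hν, integral_map measurable_fst.aemeasurable
          f.continuous.measurable.aestronglyMeasurable]

theorem stmt1 {d : ℕ} (hd : 1 ≤ d) (τ : Fin d → unitInterval → unitInterval)
    (hτ : ∀ i, Continuous (τ i))
    (nuhat : Measure (unitInterval × (ℕ → Fin d))) [IsProbabilityMeasure nuhat]
    (hhol : IsHolonomic τ nuhat)
    (ν : Measure unitInterval) (hν : ν = Measure.map Prod.fst nuhat)
    (m : unitInterval → Measure (unitInterval × (ℕ → Fin d)))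
    (hprob : ∀ y, IsProbabilityMeasure (m y))
    (hmeas : ∀ A : Set (unitInterval × (ℕ → Fin d)), MeasurableSet A →
      Measurable fun y => m y A)
    (hsupp : ∀ᵐ y ∂ν,
      m y ((({y} : Set unitInterval)ᶜ) ×ˢ (Set.univ : Set (ℕ → Fin d))) = 0)
    (hdisint : ∀ g : unitInterval × (ℕ → Fin d) → ℝ, Measurable g →
      (∃ C : ℝ, ∀ p, |g p| ≤ C) →
      ∫ p, g p ∂nuhat = ∫ y, (∫ p, g p ∂(m y)) ∂ν) :
    (∀ᵐ y ∂ν, ∑ i : Fin d,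
        (m y (({y} : Set unitInterval) ×ˢ {w : ℕ → Fin d | w 0 = i})).toReal = 1) ∧
    ∀ f : C(unitInterval, ℝ),
      (∫ y, ∑ i : Fin d,
        (m y (({y} : Set unitInterval) ×ˢ {w : ℕ → Fin d | w 0 = i})).toReal
          * f (τ i y) ∂ν)
      = ∫ y, f y ∂ν :=
  stmt1_general τ hτ nuhat hhol ν hν m hprob hsupp hdisint
end
end

section
/- Let $\phi\in\mathbb{B}^+$, $\rho>0$ and $h\in\mathbb{B}^+$ satisfy $P_\phi h=\rho h$ pointwise on $[0,1]$. Let $\nu$ be a Borel probability measure on $[0,1]$ and let $v_0,\dots,v_{d-1}:[0,1]\to(0,1]$ be Borel measurable with $\sum_{i=0}^{d-1}v_i(x)=1$ for all $x$, such that $\int\sum_{i=0}^{d-1}v_i(x)f(\tau_i(x))\,d\nu(x)=\int f\,d\nu$ for every bounded Borel $f:[0,1]\to\mathbb{R}$. Then $-\int\sum_{i=0}^{d-1}v_i\ln v_i\,d\nu+\int\ln\phi\,d\nu\le\ln\rho$. -/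
/-!
Gibbs' inequality at a point `x`, applied to the weights `vᵢ(x)` and the masses
`aᵢ = φ(τᵢ x) h(τᵢ x)` whose total is `ρ h(x)`, gives
`∑ vᵢ (log φ + log h)(τᵢ x) - ∑ vᵢ log vᵢ ≤ log ρ + log h(x)`.
Integrating against `ν` and using the invariance of `ν` on the bounded function `log φ + log h`,
the terms `∫ log h dν` cancel.
-/

open MeasureTheory

noncomputable section

/-- `f ∈ 𝔹⁺` : Borel measurable and bounded away from `0` and `∞`. -/
def MemBplus (f : unitInterval → ℝ) : Prop :=
  Measurable f ∧ ∃ c C : ℝ, 0 < c ∧ (∀ x, c ≤ f x) ∧ (∀ x, f x ≤ C)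

open Real

lemma integrable_of_abs_le {α : Type*} [MeasurableSpace α] (μ : Measure α) [IsFiniteMeasure μ]
    {f : α → ℝ} (hf : Measurable f) {C : ℝ} (hC : ∀ x, |f x| ≤ C) : Integrable f μ :=
  .of_bound hf.aestronglyMeasurable C (.of_forall hC)

theorem sum_mul_log_sub_log_le_log_sum {ι : Type*} (s : Finset ι) {v a : ι → ℝ}
    (hv : ∀ i ∈ s, 0 < v i) (ha : ∀ i ∈ s, 0 < a i) (hsum : ∑ i ∈ s, v i = 1) :
    ∑ i ∈ s, v i * (log (a i) - log (v i)) ≤ log (∑ i ∈ s, a i) := by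
  have jensen := strictConcaveOn_log_Ioi.concaveOn.le_map_sum (t := s) (p := fun i => a i / v i)
    (fun i hi => (hv i hi).le) hsum (fun i hi => div_pos (ha i hi) (hv i hi))
  simp only [smul_eq_mul] at jensen
  calc ∑ i ∈ s, v i * (log (a i) - log (v i))
      = ∑ i ∈ s, v i * log (a i / v i) := Finset.sum_congr rfl fun i hi => by
        rw [log_div (ha i hi).ne' (hv i hi).ne']
    _ ≤ log (∑ i ∈ s, v i * (a i / v i)) := jensen
    _ = log (∑ i ∈ s, a i) := by
        congr 1
        exact Finset.sum_congr rfl fun i hi => mul_div_cancel₀ _ (hv i hi).ne'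

lemma abs_sum_mul_le_of_abs_le {ι : Type*} (s : Finset ι) {v f : ι → ℝ} {C : ℝ}
    (hv : ∀ i ∈ s, 0 ≤ v i) (hsum : ∑ i ∈ s, v i = 1) (hf : ∀ i ∈ s, |f i| ≤ C) :
    |∑ i ∈ s, v i * f i| ≤ C :=
  calc |∑ i ∈ s, v i * f i| ≤ ∑ i ∈ s, v i * |f i| := by
        refine (Finset.abs_sum_le_sum_abs _ _).trans (Finset.sum_le_sum fun i hi => ?_)
        rw [abs_mul, abs_of_nonneg (hv i hi)]
    _ ≤ ∑ i ∈ s, v i * C :=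
        Finset.sum_le_sum fun i hi => mul_le_mul_of_nonneg_left (hf i hi) (hv i hi)
    _ = C := by rw [← Finset.sum_mul, hsum, one_mul]

lemma abs_sum_mul_log_self_le {ι : Type*} (s : Finset ι) {v : ι → ℝ}
    (hv : ∀ i ∈ s, 0 < v i) (hv1 : ∀ i ∈ s, v i ≤ 1) :
    |∑ i ∈ s, v i * log (v i)| ≤ s.card :=
  calc |∑ i ∈ s, v i * log (v i)| ≤ ∑ i ∈ s, |v i * log (v i)| := Finset.abs_sum_le_sum_abs _ _
    _ ≤ ∑ _i ∈ s, (1 : ℝ) := Finset.sum_le_sum fun i hi => by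
        rw [mul_comm]; exact (abs_log_mul_self_lt _ (hv i hi) (hv1 i hi)).le
    _ = s.card := by simp

lemma integrable_sum_mul_comp {α ι : Type*} [MeasurableSpace α] [Fintype ι] (μ : Measure α)
    [IsFiniteMeasure μ] {v : ι → α → ℝ} {τ : ι → α → α} {f : α → ℝ} {C : ℝ}
    (hv : ∀ i, Measurable (v i)) (hτ : ∀ i, Measurable (τ i)) (hv0 : ∀ i x, 0 ≤ v i x)
    (hsum : ∀ x, ∑ i, v i x = 1) (hf : Measurable f) (hC : ∀ x, |f x| ≤ C) :
    Integrable (fun x => ∑ i, v i x * f (τ i x)) μ :=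
  integrable_of_abs_le μ (Finset.measurable_sum _ fun i _ => (hv i).mul (hf.comp (hτ i)))
    fun x => abs_sum_mul_le_of_abs_le _ (fun i _ => hv0 i x) (hsum x) fun _ _ => hC _

lemma integrable_sum_mul_log_self {α ι : Type*} [MeasurableSpace α] [Fintype ι] (μ : Measure α)
    [IsFiniteMeasure μ] {v : ι → α → ℝ} (hv : ∀ i, Measurable (v i)) (hv0 : ∀ i x, 0 < v i x)
    (hv1 : ∀ i x, v i x ≤ 1) : Integrable (fun x => ∑ i, v i x * log (v i x)) μ :=
  integrable_of_abs_le μ (Finset.measurable_sum _ fun i _ => (hv i).mul (hv i).log) fun x =>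
    abs_sum_mul_log_self_le _ (fun i _ => hv0 i x) fun i _ => hv1 i x

namespace MemBplus

variable {f : unitInterval → ℝ}

lemma pos (hf : MemBplus f) (x : unitInterval) : 0 < f x := by
  obtain ⟨-, c, -, hc, hcf, -⟩ := hf
  exact hc.trans_le (hcf x)

lemma measurable_log (hf : MemBplus f) : Measurable fun x => log (f x) :=
  hf.1.log

lemma exists_abs_log_le (hf : MemBplus f) : ∃ M, ∀ x, |log (f x)| ≤ M := by
  obtain ⟨-, c, C, hc, hcf, hfC⟩ := hf
  refine ⟨|log c| + |log C|, fun x => abs_le.2 ⟨?_, ?_⟩⟩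
  · have := log_le_log hc (hcf x)
    linarith [neg_abs_le (log c), abs_nonneg (log C)]
  · have := log_le_log (hc.trans_le (hcf x)) (hfC x)
    linarith [le_abs_self (log C), abs_nonneg (log c)]

end MemBplus

theorem stmt3_general {d : ℕ} (τ : Fin d → unitInterval → unitInterval)
    (hτ : ∀ i, Continuous (τ i))
    (φ : unitInterval → ℝ) (hφ : MemBplus φ)
    (ρ : ℝ) (hρ : 0 < ρ) (h : unitInterval → ℝ) (hh : MemBplus h)
    (heig : ∀ x, (∑ i : Fin d, φ (τ i x) * h (τ i x)) = ρ * h x)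
    (ν : Measure unitInterval) [IsProbabilityMeasure ν]
    (v : Fin d → unitInterval → ℝ) (hvmeas : ∀ i, Measurable (v i))
    (hvpos : ∀ i x, 0 < v i x) (hvle : ∀ i x, v i x ≤ 1)
    (hvsum : ∀ x, ∑ i : Fin d, v i x = 1)
    (hinv : ∀ f : unitInterval → ℝ, Measurable f → (∃ C : ℝ, ∀ x, |f x| ≤ C) →
      (∫ x, ∑ i : Fin d, v i x * f (τ i x) ∂ν) = ∫ x, f x ∂ν) :
    (-(∫ x, ∑ i : Fin d, v i x * Real.log (v i x) ∂ν))
      + (∫ x, Real.log (φ x) ∂ν) ≤ Real.log ρ := by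
  obtain ⟨Mφ, hMφ⟩ := hφ.exists_abs_log_le
  obtain ⟨Mh, hMh⟩ := hh.exists_abs_log_le
  set g : unitInterval → ℝ := fun x => log (φ x) + log (h x)
  have hgm : Measurable g := hφ.measurable_log.add hh.measurable_log
  have hg : ∀ x, |g x| ≤ Mφ + Mh := fun x => (abs_add_le _ _).trans (add_le_add (hMφ x) (hMh x))
  have pointwise : ∀ x, (∑ i, v i x * g (τ i x)) - ∑ i, v i x * log (v i x) - log (h x)
      ≤ log ρ := by
    intro x
    have gibbs := sum_mul_log_sub_log_le_log_sum Finset.univ (fun i _ => hvpos i x)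
      (fun i _ => mul_pos (hφ.pos (τ i x)) (hh.pos (τ i x))) (hvsum x)
    simp only [heig x, log_mul hρ.ne' (hh.pos x).ne',
      log_mul (hφ.pos _).ne' (hh.pos _).ne', mul_sub, Finset.sum_sub_distrib] at gibbs
    linarith
  have intB := integrable_sum_mul_comp ν hvmeas (fun i => (hτ i).measurable)
    (fun i x => (hvpos i x).le) hvsum hgm hg
  have intA := integrable_sum_mul_log_self ν hvmeas hvpos hvle
  have intφ := integrable_of_abs_le ν hφ.measurable_log hMφ
  have inth := integrable_of_abs_le ν hh.measurable_log hMh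
  have intBA : Integrable (fun x => (∑ i, v i x * g (τ i x)) - ∑ i, v i x * log (v i x)) ν :=
    intB.sub intA
  have hmono : ∫ x, ((∑ i, v i x * g (τ i x)) - ∑ i, v i x * log (v i x) - log (h x)) ∂ν
      ≤ ∫ _, log ρ ∂ν := integral_mono (intBA.sub inth) (integrable_const _) pointwise
  rw [integral_sub intBA inth, integral_sub intB intA, hinv g hgm ⟨_, hg⟩,
    integral_add intφ inth, integral_const, probReal_univ, one_smul] at hmono
  linarith

theorem stmt3 {d : ℕ} (hd : 1 ≤ d) (τ : Fin d → unitInterval → unitInterval)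
    (hτ : ∀ i, Continuous (τ i))
    (φ : unitInterval → ℝ) (hφ : MemBplus φ)
    (ρ : ℝ) (hρ : 0 < ρ) (h : unitInterval → ℝ) (hh : MemBplus h)
    (heig : ∀ x, (∑ i : Fin d, φ (τ i x) * h (τ i x)) = ρ * h x)
    (ν : Measure unitInterval) [IsProbabilityMeasure ν]
    (v : Fin d → unitInterval → ℝ) (hvmeas : ∀ i, Measurable (v i))
    (hvpos : ∀ i x, 0 < v i x) (hvle : ∀ i x, v i x ≤ 1)
    (hvsum : ∀ x, ∑ i : Fin d, v i x = 1)
    (hinv : ∀ f : unitInterval → ℝ, Measurable f → (∃ C : ℝ, ∀ x, |f x| ≤ C) →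
      (∫ x, ∑ i : Fin d, v i x * f (τ i x) ∂ν) = ∫ x, f x ∂ν) :
    (-(∫ x, ∑ i : Fin d, v i x * Real.log (v i x) ∂ν))
      + (∫ x, Real.log (φ x) ∂ν) ≤ Real.log ρ :=
  stmt3_general τ hτ φ hφ ρ hρ h hh heig ν v hvmeas hvpos hvle hvsum hinv
end
end

section
/- Let $v_0,\dots,v_{d-1}:[0,1]\to[0,1]$ be Borel measurable with $\sum_{i=0}^{d-1}v_i=1$, and let $\nu$ be a Borel probability measure on $[0,1]$ such that $\int\sum_{i=0}^{d-1}v_i(x)f(\tau_i(x))\,d\nu(x)=\int f\,d\nu$ for every bounded Borel $f:[0,1]\to\mathbb{R}$. Let $\hat{\nu}$ be a Borel probability measure on $[0,1]\times\Sigma$ whose projection to $[0,1]$ is $\nu$ and which satisfies, for every $i\in\{0,\dots,d-1\}$ and every bounded Borel $g:[0,1]\to\mathbb{R}$: $\int_{\{(x,w):\,w_1=i\}}g(x)\,d\hat{\nu}(x,w)=\int g(x)\,v_i(x)\,d\nu(x)$. Then $\hat{\nu}$ is holonomic. -/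
/-!
Split `[0,1] × Σ` according to the first letter `w₁ = i`. On the cylinder `{w₁ = i}` the
integrand `f (τ_{w₁} x)` is `f (τ_i x)`, so by the fiber condition its integral is
`∫ v_i · (f ∘ τ_i) dν`. Summing over `i`, the invariance of `ν` turns the total into `∫ f dν`,
which is `∫ f(x) dν̂` because `ν` is the first marginal of `ν̂`.
-/

open MeasureTheory

noncomputable section

theorem integral_eq_sum_setIntegral_fiber {X ι E : Type*} [MeasurableSpace X]
    [NormedAddCommGroup E] [NormedSpace ℝ E] [Fintype ι] [MeasurableSpace ι]
    [MeasurableSingletonClass ι] {μ : Measure X} {c : X → ι} (hc : Measurable c)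
    {F : ι → X → E} (hF : ∀ i, Integrable (F i) μ) :
    ∫ x, F (c x) x ∂μ = ∑ i, ∫ x in {x | c x = i}, F i x ∂μ := by
  have hfiber_meas : ∀ i, MeasurableSet {x | c x = i} := fun i => hc (measurableSet_singleton i)
  have hF_fiber : ∀ i, Set.EqOn (fun x => F (c x) x) (F i) {x | c x = i} := by
    rintro i x (rfl : c x = i)
    rfl
  calc ∫ x, F (c x) x ∂μ = ∫ x in ⋃ i, {x | c x = i}, F (c x) x ∂μ := by
        rw [Set.iUnion_eq_univ_iff.mpr fun x => ⟨c x, rfl⟩, setIntegral_univ]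
    _ = ∑ i, ∫ x in {x | c x = i}, F (c x) x ∂μ := by
        refine integral_iUnion_fintype hfiber_meas ?_ fun i => ?_
        · exact fun i j hij => Set.disjoint_left.mpr fun x hi hj => hij (hi.symm.trans hj)
        · exact (hF i).integrableOn.congr_fun (hF_fiber i).symm (hfiber_meas i)
    _ = ∑ i, ∫ x in {x | c x = i}, F i x ∂μ :=
        Finset.sum_congr rfl fun i _ => setIntegral_congr_fun (hfiber_meas i) (hF_fiber i)

theorem stmt4_general {d : ℕ} (τ : Fin d → unitInterval → unitInterval)
    (hτ : ∀ i, Continuous (τ i))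
    (v : Fin d → unitInterval → ℝ) (hvmeas : ∀ i, Measurable (v i))
    (hv0 : ∀ i x, 0 ≤ v i x) (hv1 : ∀ i x, v i x ≤ 1)
    (ν : Measure unitInterval) [IsProbabilityMeasure ν]
    (hinv : ∀ f : unitInterval → ℝ, Measurable f → (∃ C : ℝ, ∀ x, |f x| ≤ C) →
      (∫ x, ∑ i : Fin d, v i x * f (τ i x) ∂ν) = ∫ x, f x ∂ν)
    (nuhat : Measure (unitInterval × (ℕ → Fin d))) [IsProbabilityMeasure nuhat]
    (hproj : Measure.map Prod.fst nuhat = ν)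
    (hfiber : ∀ i : Fin d, ∀ g : unitInterval → ℝ, Measurable g →
      (∃ C : ℝ, ∀ x, |g x| ≤ C) →
      (∫ p in {p : unitInterval × (ℕ → Fin d) | p.2 0 = i}, g p.1 ∂nuhat)
        = ∫ x, g x * v i x ∂ν) :
    IsHolonomic τ nuhat := by
  intro f
  have hf_bdd : ∀ x, |f x| ≤ ‖f‖ := f.norm_coe_le_norm
  have hfτ_meas : ∀ i, Measurable fun x => f (τ i x) :=
    fun i => (f.continuous.comp (hτ i)).measurable
  have hfτ_int : ∀ (i) (μ : Measure unitInterval) [IsFiniteMeasure μ],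
      Integrable (fun x => f (τ i x)) μ :=
    fun i _ _ => .of_bound (hfτ_meas i).aestronglyMeasurable _ (.of_forall fun x => hf_bdd _)
  have hv_bdd : ∀ i x, ‖v i x‖ ≤ 1 := fun i x => abs_le.mpr ⟨by linarith [hv0 i x], hv1 i x⟩
  calc ∫ p, f (τ (p.2 0) p.1) ∂nuhat
      = ∑ i, ∫ p in {p : unitInterval × (ℕ → Fin d) | p.2 0 = i}, f (τ i p.1) ∂nuhat :=
        integral_eq_sum_setIntegral_fiber (c := fun p : unitInterval × (ℕ → Fin d) => p.2 0)
          (F := fun i p => f (τ i p.1)) (by fun_prop)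
          fun i => (hfτ_int i (nuhat.map Prod.fst)).comp_measurable measurable_fst
    _ = ∑ i, ∫ x, v i x * f (τ i x) ∂ν := Finset.sum_congr rfl fun i _ => by
        rw [hfiber i _ (hfτ_meas i) ⟨‖f‖, fun x => hf_bdd _⟩]
        simp only [mul_comm]
    _ = ∫ x, ∑ i, v i x * f (τ i x) ∂ν := (integral_finsetSum _ fun i _ =>
        (hfτ_int i ν).bdd_mul (hvmeas i).aestronglyMeasurable (.of_forall (hv_bdd i))).symm
    _ = ∫ x, f x ∂ν := hinv f f.continuous.measurable ⟨‖f‖, hf_bdd⟩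
    _ = ∫ p, f p.1 ∂nuhat := by
        rw [← hproj, integral_map measurable_fst.aemeasurable f.continuous.aestronglyMeasurable]

theorem stmt4 {d : ℕ} (hd : 1 ≤ d) (τ : Fin d → unitInterval → unitInterval)
    (hτ : ∀ i, Continuous (τ i))
    (v : Fin d → unitInterval → ℝ) (hvmeas : ∀ i, Measurable (v i))
    (hv0 : ∀ i x, 0 ≤ v i x) (hv1 : ∀ i x, v i x ≤ 1)
    (hvsum : ∀ x, ∑ i : Fin d, v i x = 1)
    (ν : Measure unitInterval) [IsProbabilityMeasure ν]
    (hinv : ∀ f : unitInterval → ℝ, Measurable f → (∃ C : ℝ, ∀ x, |f x| ≤ C) →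
      (∫ x, ∑ i : Fin d, v i x * f (τ i x) ∂ν) = ∫ x, f x ∂ν)
    (nuhat : Measure (unitInterval × (ℕ → Fin d))) [IsProbabilityMeasure nuhat]
    (hproj : Measure.map Prod.fst nuhat = ν)
    (hfiber : ∀ i : Fin d, ∀ g : unitInterval → ℝ, Measurable g →
      (∃ C : ℝ, ∀ x, |g x| ≤ C) →
      (∫ p in {p : unitInterval × (ℕ → Fin d) | p.2 0 = i}, g p.1 ∂nuhat)
        = ∫ x, g x * v i x ∂ν) :
    IsHolonomic τ nuhat :=
  stmt4_general τ hτ v hvmeas hv0 hv1 ν hinv nuhat hproj hfiber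
end
end

section
/- Let $v_0,\dots,v_{d-1}:[0,1]\to[0,1]$ be Borel measurable with $\sum_{i=0}^{d-1}v_i=1$, and let $\nu$ be a Borel probability measure on $[0,1]$ such that $\int\sum_{i=0}^{d-1}v_i(x)f(\tau_i(x))\,d\nu(x)=\int f\,d\nu$ for every bounded Borel $f:[0,1]\to\mathbb{R}$. Let $\hat{\nu}$ be a Borel probability measure on $[0,1]\times\Sigma$ whose projection to $[0,1]$ is $\nu$ and which satisfies, for every $n\ge 1$, every word $(i_1,\dots,i_n)\in\{0,\dots,d-1\}^n$ and every bounded Borel $g:[0,1]\to\mathbb{R}$: $\int_{\{(x,w):\,w_1=i_1,\dots,w_n=i_n\}}g(x)\,d\hat{\nu}(x,w)=\int g(x)\,v_{i_1}(x)\,v_{i_2}(\tau_{i_1}(x))\cdots v_{i_n}(\tau_{i_{n-1}}\circ\cdots\circ\tau_{i_1}(x))\,d\nu(x)$. Then $\hat{\nu}$ is $\hat{\sigma}$-invariant, i.e. the pushforward of $\hat{\nu}$ by $\hat{\sigma}$ equals $\hat{\nu}$. -/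
open MeasureTheory

noncomputable section

/-- The skew product map on `[0,1] × Σ`. -/
def sigmaHat {d : ℕ} (τ : Fin d → unitInterval → unitInterval) :
    unitInterval × (ℕ → Fin d) → unitInterval × (ℕ → Fin d) :=
  fun p => (τ (p.2 0) p.1, fun n => p.2 (n + 1))

/-- The `k`-branch `Z_k(x,w) = τ_{w_k} ∘ ⋯ ∘ τ_{w_1}(x)`. -/
def orbitZ {d : ℕ} (τ : Fin d → unitInterval → unitInterval) :
    ℕ → unitInterval → (ℕ → Fin d) → unitInterval
  | 0, x, _ => x
  | (k + 1), x, w => τ (w k) (orbitZ τ k x w)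

/-!
The preimage under `σ̂` of a rectangle `A × [w₀ … wₙ₋₁]` is the disjoint union over `j` of the
rectangles `τⱼ⁻¹ A × [j w₀ … wₙ₋₁]`. By the cylinder formula the `ν̂`-mass of the `j`-th piece
is `∫ vⱼ · (F ∘ τⱼ) dν`, where `F(x) = 1_A(x) v_{w₀}(x) v_{w₁}(τ_{w₀} x) ⋯`, so summing over `j`
and using the invariance of `ν` gives `∫ F dν`, which is the `ν̂`-mass of the rectangle itself.
These rectangles form a π-system generating the σ-algebra of `[0,1] × Σ`, hence `σ̂₊ ν̂ = ν̂`.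
-/

open Set Function PiNat

namespace PiNat

variable {α : Type*}

variable (α) in
def cylinders : Set (Set (ℕ → α)) := {s | ∃ x n, cylinder x n = s}

theorem isPiSystem_cylinders : IsPiSystem (cylinders α) := by
  rintro _ ⟨x, m, rfl⟩ _ ⟨y, n, rfl⟩ ⟨z, hzx, hzy⟩
  rw [mem_cylinder_iff_eq] at hzx hzy
  refine ⟨z, max m n, ?_⟩
  ext ω
  simp only [← hzx, ← hzy, mem_inter_iff, mem_cylinder_iff, lt_max_iff, or_imp, forall_and]

theorem isCountablySpanning_cylinders [Nonempty α] : IsCountablySpanning (cylinders α) :=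
  ⟨fun _ => univ, fun _ => ⟨Classical.arbitrary _, 0, cylinder_zero _⟩, iUnion_const _⟩

theorem countable_range_cylinder [Countable α] (n : ℕ) :
    (range fun x : ℕ → α => cylinder x n).Countable := by
  refine (countable_range fun l : List α => {y | res y n = l}).mono ?_
  rintro _ ⟨x, rfl⟩
  exact ⟨res x n, (cylinder_eq_res x n).symm⟩

theorem setOf_apply_eq_sUnion_cylinder (k : ℕ) (a : α) :
    {ω : ℕ → α | ω k = a} = ⋃₀ ((fun x => cylinder x (k + 1)) '' {x | x k = a}) := by
  ext ω
  constructor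
  · intro h
    exact ⟨_, ⟨ω, h, rfl⟩, self_mem_cylinder ω _⟩
  · rintro ⟨_, ⟨x, hx, rfl⟩, hω⟩
    exact (mem_cylinder_iff.1 hω k k.lt_succ_self).trans hx

variable [MeasurableSpace α] [MeasurableSingletonClass α]

theorem measurableSet_cylinder (x : ℕ → α) (n : ℕ) : MeasurableSet (cylinder x n) := by
  rw [cylinder_eq_pi]
  exact MeasurableSet.pi (to_countable _) fun i _ => measurableSet_singleton _

theorem generateFrom_cylinders [Countable α] :
    MeasurableSpace.generateFrom (cylinders α) = MeasurableSpace.pi := by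
  refine le_antisymm (MeasurableSpace.generateFrom_le ?_) (iSup_le fun k => ?_)
  · rintro _ ⟨x, n, rfl⟩
    exact measurableSet_cylinder x n
  · refine (@measurable_to_countable' α (ℕ → α) _ _ (.generateFrom _) _ fun a => ?_).comap_le
    rw [show (fun ω : ℕ → α => ω k) ⁻¹' {a} = {ω | ω k = a} from rfl,
      setOf_apply_eq_sUnion_cylinder]
    refine .sUnion ((countable_range_cylinder (k + 1)).mono (image_subset_range _ _)) ?_
    rintro _ ⟨x, -, rfl⟩
    exact .basic _ ⟨x, k + 1, rfl⟩

theorem generateFrom_prod_cylinders [Countable α] [Nonempty α] {β : Type*} [MeasurableSpace β] :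
    MeasurableSpace.generateFrom (image2 (· ×ˢ ·) {A : Set β | MeasurableSet A} (cylinders α))
      = Prod.instMeasurableSpace := by
  rw [← generateFrom_prod_eq isCountablySpanning_measurableSet isCountablySpanning_cylinders,
    generateFrom_cylinders, MeasurableSpace.generateFrom_measurableSet]

end PiNat

def seqCons {α : Type*} (a : α) (w : ℕ → α) : ℕ → α
  | 0 => a
  | k + 1 => w k

section SkewProduct

variable {d : ℕ} {τ : Fin d → unitInterval → unitInterval}

theorem measurable_sigmaHat (hτ : ∀ i, Measurable (τ i)) : Measurable (sigmaHat τ) := by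
  have hτ' : Measurable fun q : unitInterval × Fin d => τ q.2 q.1 :=
    measurable_from_prod_countable_left hτ
  exact (hτ'.comp (measurable_fst.prodMk ((measurable_pi_apply 0).comp measurable_snd))).prodMk
    (measurable_pi_lambda _ fun n => (measurable_pi_apply (n + 1)).comp measurable_snd)

theorem preimage_sigmaHat_prod_cylinder (A : Set unitInterval) (w : ℕ → Fin d) (n : ℕ) :
    sigmaHat τ ⁻¹' (A ×ˢ cylinder w n)
      = ⋃ j, (τ j ⁻¹' A) ×ˢ cylinder (seqCons j w) (n + 1) := by
  ext ⟨x, ω⟩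
  simp only [sigmaHat, mem_preimage, mem_prod, mem_cylinder_iff, mem_iUnion]
  constructor
  · rintro ⟨hxA, hω⟩
    refine ⟨ω 0, hxA, fun k hk => ?_⟩
    cases k with
    | zero => rfl
    | succ k => exact hω k (by omega)
  · rintro ⟨j, hxA, hω⟩
    obtain rfl : ω 0 = j := hω 0 n.succ_pos
    exact ⟨hxA, fun k hk => hω (k + 1) (by omega)⟩

theorem pairwise_disjoint_prod_cylinder_seqCons (A : Set unitInterval) (w : ℕ → Fin d) (n : ℕ) :
    Pairwise (Disjoint on fun j => (τ j ⁻¹' A) ×ˢ cylinder (seqCons j w) (n + 1)) := by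
  intro j j' hjj'
  refine disjoint_left.2 ?_
  rintro ⟨x, ω⟩ ⟨-, h⟩ ⟨-, h'⟩
  exact hjj' ((h 0 n.succ_pos).symm.trans (h' 0 n.succ_pos))

theorem orbitZ_seqCons (j : Fin d) (w : ℕ → Fin d) (k : ℕ) (x : unitInterval) :
    orbitZ τ (k + 1) x (seqCons j w) = orbitZ τ k (τ j x) w := by
  induction k with
  | zero => rfl
  | succ k ih => exact congrArg (τ (w k)) ih

theorem measurable_orbitZ (hτ : ∀ i, Measurable (τ i)) (k : ℕ) (w : ℕ → Fin d) :
    Measurable fun x => orbitZ τ k x w := by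
  induction k with
  | zero => exact measurable_id
  | succ k ih => exact (hτ (w k)).comp ih

variable (τ) in
def wordWeight (v : Fin d → unitInterval → ℝ) (n : ℕ) (w : ℕ → Fin d) (x : unitInterval) : ℝ :=
  ∏ k ∈ Finset.range n, v (w k) (orbitZ τ k x w)

variable {v : Fin d → unitInterval → ℝ}

theorem wordWeight_seqCons (j : Fin d) (w : ℕ → Fin d) (n : ℕ) (x : unitInterval) :
    wordWeight τ v (n + 1) (seqCons j w) x = v j x * wordWeight τ v n w (τ j x) := by
  simp only [wordWeight, Finset.prod_range_succ', orbitZ_seqCons]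
  rw [mul_comm]
  rfl

@[simp] theorem wordWeight_zero (w : ℕ → Fin d) : wordWeight τ v 0 w = 1 := by
  ext x
  simp [wordWeight]

theorem measurable_wordWeight (hτ : ∀ i, Measurable (τ i)) (hv : ∀ i, Measurable (v i))
    (n : ℕ) (w : ℕ → Fin d) : Measurable (wordWeight τ v n w) :=
  Finset.measurable_prod _ fun k _ => (hv (w k)).comp (measurable_orbitZ hτ k w)

theorem abs_wordWeight_le_one (hv : ∀ i x, |v i x| ≤ 1) (n : ℕ) (w : ℕ → Fin d)
    (x : unitInterval) : |wordWeight τ v n w x| ≤ 1 := by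
  rw [wordWeight, Finset.abs_prod]
  exact Finset.prod_le_one (fun _ _ => abs_nonneg _) fun k _ => hv _ _

variable {ν : Measure unitInterval} {nuhat : Measure (unitInterval × (ℕ → Fin d))}

theorem measureReal_prod_cylinder (hproj : nuhat.map Prod.fst = ν)
    (hcyl : ∀ n : ℕ, 1 ≤ n → ∀ w : ℕ → Fin d, ∀ g : unitInterval → ℝ,
      Measurable g → (∃ C : ℝ, ∀ x, |g x| ≤ C) →
      (∫ p in {p : unitInterval × (ℕ → Fin d) | ∀ k < n, p.2 k = w k}, g p.1 ∂nuhat)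
        = ∫ x, g x * wordWeight τ v n w x ∂ν)
    {A : Set unitInterval} (hA : MeasurableSet A) (n : ℕ) (w : ℕ → Fin d) :
    nuhat.real (A ×ˢ cylinder w n) = ∫ x, A.indicator (wordWeight τ v n w) x ∂ν := by
  rcases n.eq_zero_or_pos with rfl | hn
  · rw [cylinder_zero, prod_univ, wordWeight_zero, integral_indicator_one hA, ← hproj,
      map_measureReal_apply measurable_fst hA]
  have hAbdd : ∃ C : ℝ, ∀ x, |A.indicator (1 : unitInterval → ℝ) x| ≤ C :=
    ⟨1, fun x => by by_cases hx : x ∈ A <;> simp [hx]⟩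
  have key := hcyl n hn w _ (measurable_one.indicator hA) hAbdd
  change ∫ p in Prod.snd ⁻¹' cylinder w n, (Prod.fst ⁻¹' A).indicator 1 p ∂nuhat = _ at key
  rw [setIntegral_indicator (measurable_fst hA), Pi.one_def, setIntegral_one_eq_measureReal,
    inter_comm, ← prod_eq] at key
  rw [key]
  congr 1 with x
  by_cases hx : x ∈ A <;> simp [hx]

theorem map_sigmaHat_real_prod_cylinder [IsFiniteMeasure ν] [IsFiniteMeasure nuhat]
    (hτ : ∀ i, Measurable (τ i)) (hvm : ∀ i, Measurable (v i)) (hv : ∀ i x, |v i x| ≤ 1)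
    (hinv : ∀ f : unitInterval → ℝ, Measurable f → (∃ C : ℝ, ∀ x, |f x| ≤ C) →
      (∫ x, ∑ i : Fin d, v i x * f (τ i x) ∂ν) = ∫ x, f x ∂ν)
    (hrect : ∀ A, MeasurableSet A → ∀ n w,
      nuhat.real (A ×ˢ cylinder w n) = ∫ x, A.indicator (wordWeight τ v n w) x ∂ν)
    {A : Set unitInterval} (hA : MeasurableSet A) (n : ℕ) (w : ℕ → Fin d) :
    (nuhat.map (sigmaHat τ)).real (A ×ˢ cylinder w n) = nuhat.real (A ×ˢ cylinder w n) := by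
  set F := A.indicator (wordWeight τ v n w)
  have hFm : Measurable F := (measurable_wordWeight hτ hvm n w).indicator hA
  have hF x : |F x| ≤ 1 :=
    (norm_indicator_le_norm_self (wordWeight τ v n w) x).trans (abs_wordWeight_le_one hv n w x)
  have hint j : Integrable (fun x => v j x * F (τ j x)) ν := by
    refine .of_bound ((hvm j).mul (hFm.comp (hτ j))).aestronglyMeasurable 1
      (.of_forall fun x => ?_)
    rw [Real.norm_eq_abs, abs_mul, ← one_mul 1]
    exact mul_le_mul (hv j x) (hF _) (abs_nonneg _) zero_le_one
  calc (nuhat.map (sigmaHat τ)).real (A ×ˢ cylinder w n)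
      = ∑ j, nuhat.real ((τ j ⁻¹' A) ×ˢ cylinder (seqCons j w) (n + 1)) := by
        rw [map_measureReal_apply (measurable_sigmaHat hτ)
          (hA.prod (measurableSet_cylinder w n)), preimage_sigmaHat_prod_cylinder,
          measureReal_iUnion_fintype (pairwise_disjoint_prod_cylinder_seqCons A w n)
          fun j => (hτ j hA).prod (measurableSet_cylinder _ _)]
    _ = ∑ j, ∫ x, v j x * F (τ j x) ∂ν := by
        refine Finset.sum_congr rfl fun j _ => ?_
        rw [hrect _ (hτ j hA)]
        congr 1 with x
        by_cases hx : τ j x ∈ A <;> simp [F, hx, wordWeight_seqCons]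
    _ = ∫ x, F x ∂ν := by
        rw [← integral_finsetSum _ fun j _ => hint j]
        exact hinv F hFm ⟨1, hF⟩
    _ = nuhat.real (A ×ˢ cylinder w n) := (hrect A hA n w).symm

end SkewProduct

theorem stmt5_general {d : ℕ} (hd : 1 ≤ d) (τ : Fin d → unitInterval → unitInterval)
    (hτ : ∀ i, Continuous (τ i))
    (v : Fin d → unitInterval → ℝ) (hvmeas : ∀ i, Measurable (v i))
    (hv0 : ∀ i x, 0 ≤ v i x) (hv1 : ∀ i x, v i x ≤ 1)
    (ν : Measure unitInterval) [IsProbabilityMeasure ν]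
    (hinv : ∀ f : unitInterval → ℝ, Measurable f → (∃ C : ℝ, ∀ x, |f x| ≤ C) →
      (∫ x, ∑ i : Fin d, v i x * f (τ i x) ∂ν) = ∫ x, f x ∂ν)
    (nuhat : Measure (unitInterval × (ℕ → Fin d))) [IsProbabilityMeasure nuhat]
    (hproj : Measure.map Prod.fst nuhat = ν)
    (hcyl : ∀ n : ℕ, 1 ≤ n → ∀ w : ℕ → Fin d, ∀ g : unitInterval → ℝ,
      Measurable g → (∃ C : ℝ, ∀ x, |g x| ≤ C) →
      (∫ p in {p : unitInterval × (ℕ → Fin d) | ∀ k < n, p.2 k = w k},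
          g p.1 ∂nuhat)
        = ∫ x, g x * ∏ k ∈ Finset.range n, v (w k) (orbitZ τ k x w) ∂ν) :
    Measure.map (sigmaHat τ) nuhat = nuhat := by
  have : Nonempty (Fin d) := ⟨⟨0, hd⟩⟩
  have hτm i : Measurable (τ i) := (hτ i).measurable
  have hv i x : |v i x| ≤ 1 := abs_le.2 ⟨by linarith [hv0 i x], hv1 i x⟩
  have hrect A (hA : MeasurableSet A) n w := measureReal_prod_cylinder (v := v) hproj hcyl hA n w
  refine ext_of_generate_finite _ generateFrom_prod_cylinders.symm
    (MeasurableSpace.isPiSystem_measurableSet.prod isPiSystem_cylinders) ?_ ?_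
  · rintro _ ⟨A, hA, _, ⟨w, n, rfl⟩, rfl⟩
    exact (measureReal_eq_measureReal_iff).1
      (map_sigmaHat_real_prod_cylinder hτm hvmeas hv hinv hrect hA n w)
  · rw [Measure.map_apply (measurable_sigmaHat hτm) .univ, preimage_univ]

theorem stmt5 {d : ℕ} (hd : 1 ≤ d) (τ : Fin d → unitInterval → unitInterval)
    (hτ : ∀ i, Continuous (τ i))
    (v : Fin d → unitInterval → ℝ) (hvmeas : ∀ i, Measurable (v i))
    (hv0 : ∀ i x, 0 ≤ v i x) (hv1 : ∀ i x, v i x ≤ 1)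
    (hvsum : ∀ x, ∑ i : Fin d, v i x = 1)
    (ν : Measure unitInterval) [IsProbabilityMeasure ν]
    (hinv : ∀ f : unitInterval → ℝ, Measurable f → (∃ C : ℝ, ∀ x, |f x| ≤ C) →
      (∫ x, ∑ i : Fin d, v i x * f (τ i x) ∂ν) = ∫ x, f x ∂ν)
    (nuhat : Measure (unitInterval × (ℕ → Fin d))) [IsProbabilityMeasure nuhat]
    (hproj : Measure.map Prod.fst nuhat = ν)
    (hcyl : ∀ n : ℕ, 1 ≤ n → ∀ w : ℕ → Fin d, ∀ g : unitInterval → ℝ,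
      Measurable g → (∃ C : ℝ, ∀ x, |g x| ≤ C) →
      (∫ p in {p : unitInterval × (ℕ → Fin d) | ∀ k < n, p.2 k = w k},
          g p.1 ∂nuhat)
        = ∫ x, g x * ∏ k ∈ Finset.range n, v (w k) (orbitZ τ k x w) ∂ν) :
    Measure.map (sigmaHat τ) nuhat = nuhat :=
  stmt5_general hd τ hτ v hvmeas hv0 hv1 ν hinv nuhat hproj hcyl
end
end

section
/- For every holonomic probability $\hat{\nu}$ on $[0,1]\times\Sigma$, the entropy satisfies $0\le h(\hat{\nu})\le\ln d$. -/
open MeasureTheory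

noncomputable section

/-- The entropy of a holonomic probability:
`h(ν̂) = inf_{f ∈ 𝔹⁺} ∫ ln ( (∑ i, f(τ_i x)) / f(x) ) dν̂`. -/
def entropy {d : ℕ} (τ : Fin d → unitInterval → unitInterval)
    (nuhat : Measure (unitInterval × (ℕ → Fin d))) : ℝ :=
  sInf {r : ℝ | ∃ f : unitInterval → ℝ, MemBplus f ∧
    r = ∫ p, Real.log ((∑ i : Fin d, f (τ i p.1)) / f p.1) ∂nuhat}

/-!
Taking `f = 1` gives the value `ln d`, so `h(ν̂) ≤ ln d`. For the lower bound, the sum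
`∑ i, f (τ i x)` dominates its term `f (τ_{w₁} x)`, so the integrand is at least
`ln f (τ_{w₁} x) - ln f x`; holonomy, which extends from continuous to all Borel
functions because it identifies two push-forwards of `ν̂`, makes the integral of this
difference vanish.
-/

open Real

namespace MemBplus

variable {f : unitInterval → ℝ}

lemma integrable_log_comp {α : Type*} [MeasurableSpace α] {μ : Measure α} [IsFiniteMeasure μ]
    (hf : MemBplus f) {g : α → unitInterval} (hg : Measurable g) :
    Integrable (fun a => log (f (g a))) μ := by
  obtain ⟨hfm, c, C, hc, hcf, hfC⟩ := hf
  refine .of_bound (hfm.comp hg).log.aestronglyMeasurable (max |log c| |log C|)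
    (ae_of_all _ fun a => ?_)
  rw [norm_eq_abs, abs_le]
  exact ⟨(neg_le_neg (le_max_left _ _)).trans ((neg_abs_le _).trans (log_le_log hc (hcf _))),
    (log_le_log (hc.trans_le (hcf _)) (hfC _)).trans ((le_abs_self _).trans (le_max_right _ _))⟩

end MemBplus

section Holonomic

variable {d : ℕ} {τ : Fin d → unitInterval → unitInterval}
  {ν : Measure (unitInterval × (ℕ → Fin d))}

lemma measurable_apply_head (hτ : ∀ i, Continuous (τ i)) :
    Measurable fun p : unitInterval × (ℕ → Fin d) => τ (p.2 0) p.1 := by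
  have hτ' : Measurable fun q : unitInterval × Fin d => τ q.2 q.1 :=
    measurable_from_prod_countable_left fun i => (hτ i).measurable
  exact hτ'.comp (measurable_fst.prodMk ((measurable_pi_apply 0).comp measurable_snd))

lemma IsHolonomic.map_eq [IsFiniteMeasure ν] (hτ : ∀ i, Continuous (τ i))
    (hhol : IsHolonomic τ ν) :
    ν.map (fun p => τ (p.2 0) p.1) = ν.map Prod.fst := by
  refine ext_of_forall_integral_eq_of_IsFiniteMeasure fun g => ?_
  rw [integral_map (measurable_apply_head hτ).aemeasurable g.continuous.aestronglyMeasurable,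
    integral_map measurable_fst.aemeasurable g.continuous.aestronglyMeasurable]
  exact hhol g.toContinuousMap

lemma IsHolonomic.integral_comp_eq [IsFiniteMeasure ν] (hτ : ∀ i, Continuous (τ i))
    (hhol : IsHolonomic τ ν) {g : unitInterval → ℝ} (hg : Measurable g) :
    ∫ p, g (τ (p.2 0) p.1) ∂ν = ∫ p, g p.1 ∂ν := by
  rw [← integral_map (measurable_apply_head hτ).aemeasurable hg.aestronglyMeasurable,
    hhol.map_eq hτ, integral_map measurable_fst.aemeasurable hg.aestronglyMeasurable]

lemma MemBplus.head_le_sum {f : unitInterval → ℝ} (hf : MemBplus f)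
    (p : unitInterval × (ℕ → Fin d)) : f (τ (p.2 0) p.1) ≤ ∑ i, f (τ i p.1) :=
  Finset.single_le_sum (fun i _ => (hf.pos (τ i p.1)).le) (Finset.mem_univ (p.2 0))

lemma MemBplus.log_head_sub_log_le {f : unitInterval → ℝ} (hf : MemBplus f)
    (p : unitInterval × (ℕ → Fin d)) :
    log (f (τ (p.2 0) p.1)) - log (f p.1) ≤ log ((∑ i, f (τ i p.1)) / f p.1) := by
  rw [← log_div (hf.pos _).ne' (hf.pos _).ne']
  exact log_le_log (div_pos (hf.pos _) (hf.pos _))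
    (div_le_div_of_nonneg_right (hf.head_le_sum p) (hf.pos _).le)

lemma MemBplus.integrable_log_sum_div [IsFiniteMeasure ν] (hτ : ∀ i, Continuous (τ i))
    {f : unitInterval → ℝ} (hf : MemBplus f) :
    Integrable (fun p => log ((∑ i, f (τ i p.1)) / f p.1)) ν := by
  have ⟨hfm, c, C, hc, hcf, hfC⟩ := hf
  have hle_const (p : unitInterval × (ℕ → Fin d)) :
      log ((∑ i, f (τ i p.1)) / f p.1) ≤ log (d * C / c) := by
    have hsum : ∑ i, f (τ i p.1) ≤ d * C := by
      simpa using Finset.sum_le_sum fun i (_ : i ∈ Finset.univ) => hfC (τ i p.1)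
    have hsum_pos : 0 < ∑ i, f (τ i p.1) := (hf.pos _).trans_le (hf.head_le_sum p)
    exact log_le_log (div_pos hsum_pos (hf.pos _))
      (div_le_div₀ (hsum_pos.le.trans hsum) hsum hc (hcf _))
  refine integrable_of_le_of_le ?_ (ae_of_all _ hf.log_head_sub_log_le) (ae_of_all _ hle_const)
    ((hf.integrable_log_comp (measurable_apply_head hτ)).sub
      (hf.integrable_log_comp measurable_fst)) (integrable_const _)
  exact ((Finset.measurable_sum _ fun i _ => (hfm.comp (hτ i).measurable).comp measurable_fst).div
    (hfm.comp measurable_fst)).log.aestronglyMeasurable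

lemma IsHolonomic.integral_log_sum_div_nonneg [IsFiniteMeasure ν] (hτ : ∀ i, Continuous (τ i))
    (hhol : IsHolonomic τ ν) {f : unitInterval → ℝ} (hf : MemBplus f) :
    0 ≤ ∫ p, log ((∑ i, f (τ i p.1)) / f p.1) ∂ν := by
  have hlog_head := hf.integrable_log_comp (μ := ν) (measurable_apply_head hτ)
  have hlog := hf.integrable_log_comp (μ := ν) measurable_fst
  calc 0 = ∫ p, (log (f (τ (p.2 0) p.1)) - log (f p.1)) ∂ν := by
        rw [integral_sub hlog_head hlog, hhol.integral_comp_eq hτ hf.1.log, sub_self]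
    _ ≤ ∫ p, log ((∑ i, f (τ i p.1)) / f p.1) ∂ν :=
        integral_mono (hlog_head.sub hlog) (hf.integrable_log_sum_div hτ) hf.log_head_sub_log_le

end Holonomic

theorem stmt9_general {d : ℕ} (τ : Fin d → unitInterval → unitInterval)
    (hτ : ∀ i, Continuous (τ i))
    (nuhat : Measure (unitInterval × (ℕ → Fin d))) [IsProbabilityMeasure nuhat]
    (hhol : IsHolonomic τ nuhat) :
    0 ≤ entropy τ nuhat ∧ entropy τ nuhat ≤ Real.log (d : ℝ) := by
  have hnonneg : ∀ r ∈ {r : ℝ | ∃ f : unitInterval → ℝ, MemBplus f ∧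
      r = ∫ p, Real.log ((∑ i : Fin d, f (τ i p.1)) / f p.1) ∂nuhat}, 0 ≤ r := by
    rintro r ⟨f, hf, rfl⟩
    exact hhol.integral_log_sum_div_nonneg hτ hf
  have hone : MemBplus fun _ => 1 :=
    ⟨measurable_const, 1, 1, one_pos, fun _ => le_rfl, fun _ => le_rfl⟩
  refine ⟨Real.sInf_nonneg hnonneg, csInf_le ⟨0, hnonneg⟩ ⟨_, hone, ?_⟩⟩
  simp

theorem stmt9 {d : ℕ} (hd : 1 ≤ d) (τ : Fin d → unitInterval → unitInterval)
    (hτ : ∀ i, Continuous (τ i))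
    (nuhat : Measure (unitInterval × (ℕ → Fin d))) [IsProbabilityMeasure nuhat]
    (hhol : IsHolonomic τ nuhat) :
    0 ≤ entropy τ nuhat ∧ entropy τ nuhat ≤ Real.log (d : ℝ) :=
  stmt9_general τ hτ nuhat hhol
end
end

section
/- Let $\phi\in\mathbb{B}^+$ and suppose $\rho_1>0$ and $\rho_2>0$ are such that $([0,1],\tau_i,\phi)$ is both a $\rho_1$-weighted system and a $\rho_2$-weighted system. Then $\rho_1=\rho_2$; i.e. the transfer operator $P_\phi$ has a unique positive eigenvalue admitting a positive bounded eigenfunction together with a dual-eigenprobability. -/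
open MeasureTheory

noncomputable section

/-- The transfer (Ruelle) operator `P_φ f (x) = ∑ i, φ(τ_i x) f(τ_i x)`. -/
def transferOp {d : ℕ} (τ : Fin d → unitInterval → unitInterval)
    (φ : unitInterval → ℝ) (f : unitInterval → ℝ) : unitInterval → ℝ :=
  fun x => ∑ i : Fin d, φ (τ i x) * f (τ i x)

/-- `([0,1], τ_i, φ)` is a `ρ`-weighted system. -/
def IsRhoWeighted {d : ℕ} (τ : Fin d → unitInterval → unitInterval)
    (φ : unitInterval → ℝ) (ρ : ℝ) : Prop :=
  ∃ h : unitInterval → ℝ, MemBplus h ∧ (∀ x, transferOp τ φ h x = ρ * h x) ∧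
    ∃ ν : Measure unitInterval, IsProbabilityMeasure ν ∧
      ∀ f : C(unitInterval, ℝ),
        (∫ x, transferOp τ φ f x ∂ν) = ρ * ∫ x, f x ∂ν

/- Proof idea: if `P h₁ = ρ₁ h₁` and `P h₂ = ρ₂ h₂` with `h₁, h₂` bounded above and away from `0`,
then `h₁ ≤ K h₂` for a constant `K`, and applying the positive operator `P` `n` times gives
`ρ₁ⁿ h₁ ≤ K ρ₂ⁿ h₂`. Comparing the bounds of `h₁` and `h₂`, `(ρ₁ / ρ₂)ⁿ` stays bounded, so
`ρ₁ ≤ ρ₂`; by symmetry `ρ₁ = ρ₂`. -/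

lemma le_of_forall_pow_mul_le {a b c M : ℝ} (hb : 0 < b) (hc : 0 < c)
    (h : ∀ n : ℕ, a ^ n * c ≤ M * b ^ n) : a ≤ b := by
  by_contra! hba
  obtain ⟨n, hn⟩ := pow_unbounded_of_one_lt (M / c) ((one_lt_div hb).2 hba)
  exact hn.not_ge (by rw [div_pow, div_le_div_iff₀ (pow_pos hb n) hc]; exact h n)

section TransferOp

variable {d : ℕ} (τ : Fin d → unitInterval → unitInterval) (φ : unitInterval → ℝ)

lemma transferOp_mono (hφ : ∀ x, 0 ≤ φ x) {f g : unitInterval → ℝ} (hfg : ∀ x, f x ≤ g x)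
    (x : unitInterval) : transferOp τ φ f x ≤ transferOp τ φ g x :=
  Finset.sum_le_sum fun _ _ => mul_le_mul_of_nonneg_left (hfg _) (hφ _)

lemma transferOp_const_mul (c : ℝ) (f : unitInterval → ℝ) (x : unitInterval) :
    transferOp τ φ (fun y => c * f y) x = c * transferOp τ φ f x := by
  simp only [transferOp, Finset.mul_sum]
  exact Finset.sum_congr rfl fun _ _ => by ring

lemma pow_mul_le_of_eigenfunctions (hφ : ∀ x, 0 ≤ φ x) {h₁ h₂ : unitInterval → ℝ} {ρ₁ ρ₂ K : ℝ}
    (heig₁ : ∀ x, transferOp τ φ h₁ x = ρ₁ * h₁ x)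
    (heig₂ : ∀ x, transferOp τ φ h₂ x = ρ₂ * h₂ x) (hle : ∀ x, h₁ x ≤ K * h₂ x) :
    ∀ (n : ℕ) (x : unitInterval), ρ₁ ^ n * h₁ x ≤ K * (ρ₂ ^ n * h₂ x) := by
  intro n
  induction n with
  | zero => simpa using hle
  | succ n ih =>
    intro x
    calc ρ₁ ^ (n + 1) * h₁ x = transferOp τ φ (fun y => ρ₁ ^ n * h₁ y) x := by
          rw [transferOp_const_mul, heig₁]; ring
      _ ≤ transferOp τ φ (fun y => K * (ρ₂ ^ n * h₂ y)) x := transferOp_mono τ φ hφ ih x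
      _ = K * (ρ₂ ^ (n + 1) * h₂ x) := by
          rw [transferOp_const_mul, transferOp_const_mul, heig₂]; ring

lemma le_of_isRhoWeighted (hφ : ∀ x, 0 ≤ φ x) {ρ₁ ρ₂ : ℝ} (hρ₁ : 0 < ρ₁) (hρ₂ : 0 < ρ₂)
    (hw₁ : IsRhoWeighted τ φ ρ₁) (hw₂ : IsRhoWeighted τ φ ρ₂) : ρ₁ ≤ ρ₂ := by
  obtain ⟨h₁, ⟨-, c₁, C₁, hc₁, hl₁, hu₁⟩, heig₁, -⟩ := hw₁
  obtain ⟨h₂, ⟨-, c₂, C₂, hc₂, hl₂, hu₂⟩, heig₂, -⟩ := hw₂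
  have hK : 0 ≤ C₁ / c₂ := div_nonneg (hc₁.le.trans ((hl₁ 0).trans (hu₁ 0))) hc₂.le
  have hle : ∀ x, h₁ x ≤ C₁ / c₂ * h₂ x := fun x =>
    calc h₁ x ≤ C₁ / c₂ * c₂ := by rw [div_mul_cancel₀ C₁ hc₂.ne']; exact hu₁ x
      _ ≤ C₁ / c₂ * h₂ x := mul_le_mul_of_nonneg_left (hl₂ x) hK
  have hiter := pow_mul_le_of_eigenfunctions τ φ hφ heig₁ heig₂ hle
  refine le_of_forall_pow_mul_le hρ₂ hc₁ (M := C₁ / c₂ * C₂) fun n => ?_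
  calc ρ₁ ^ n * c₁ ≤ ρ₁ ^ n * h₁ 0 := mul_le_mul_of_nonneg_left (hl₁ 0) (pow_pos hρ₁ n).le
    _ ≤ C₁ / c₂ * (ρ₂ ^ n * h₂ 0) := hiter n 0
    _ ≤ C₁ / c₂ * (ρ₂ ^ n * C₂) :=
        mul_le_mul_of_nonneg_left (mul_le_mul_of_nonneg_left (hu₂ 0) (pow_pos hρ₂ n).le) hK
    _ = C₁ / c₂ * C₂ * ρ₂ ^ n := by ring

end TransferOp

theorem stmt11_general {d : ℕ} (τ : Fin d → unitInterval → unitInterval)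
    (φ : unitInterval → ℝ) (hφ : MemBplus φ)
    (ρ₁ ρ₂ : ℝ) (hρ₁ : 0 < ρ₁) (hρ₂ : 0 < ρ₂)
    (hw₁ : IsRhoWeighted τ φ ρ₁) (hw₂ : IsRhoWeighted τ φ ρ₂) :
    ρ₁ = ρ₂ := by
  obtain ⟨c, -, hc, hcφ, -⟩ := hφ.2
  have hφ_nonneg : ∀ x, 0 ≤ φ x := fun x => hc.le.trans (hcφ x)
  exact le_antisymm (le_of_isRhoWeighted τ φ hφ_nonneg hρ₁ hρ₂ hw₁ hw₂)
    (le_of_isRhoWeighted τ φ hφ_nonneg hρ₂ hρ₁ hw₂ hw₁)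

theorem stmt11 {d : ℕ} (hd : 1 ≤ d) (τ : Fin d → unitInterval → unitInterval)
    (hτ : ∀ i, Continuous (τ i))
    (φ : unitInterval → ℝ) (hφ : MemBplus φ)
    (ρ₁ ρ₂ : ℝ) (hρ₁ : 0 < ρ₁) (hρ₂ : 0 < ρ₂)
    (hw₁ : IsRhoWeighted τ φ ρ₁) (hw₂ : IsRhoWeighted τ φ ρ₂) :
    ρ₁ = ρ₂ :=
  stmt11_general τ φ hφ ρ₁ ρ₂ hρ₁ hρ₂ hw₁ hw₂
end
end

section
/- Consider the IFS on $[0,1]$ with $d=2$ maps $\tau_0(x)=x$ and $\tau_1(x)=1-x$. Let $\bar{w}\in\Sigma=\{0,1\}^{\mathbb{N}}$ be any sequence different from the constant sequence $(1,1,1,\dots)$, and let $\hat{\nu}_0=\frac{1}{2}\big(\delta_{(0,\,11\bar{w})}+\delta_{(1,\,1\bar{w})}\big)$. Then $h(\hat{\nu}_0)=\ln 2$; in particular $\hat{\nu}_0$ attains the supremum $\sup\{h(\hat{\nu}):\hat{\nu}\text{ holonomic}\}=\ln 2$. -/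
/-!
The constant weight `f = 1` shows that the entropy of any probability is at most `ln 2`.
For `ν̂₀`, the integrand of the entropy functional only sees `f 0` and `f 1`, since `τ₀` and `τ₁`
permute `{0, 1}`; with `a = f 0`, `b = f 1` it is the mean of `ln ((a + b) / a)` and
`ln ((a + b) / b)`, which is `≥ ln 2` because `(a + b)² ≥ 4ab`, with equality at `a = b`.
-/

open MeasureTheory

noncomputable section

/-- Prepend a symbol to a sequence. -/
def prepend (a : Fin 2) (w : ℕ → Fin 2) : ℕ → Fin 2 :=
  fun n => Nat.casesOn n a w

/-- The IFS `τ₀(x) = x`, `τ₁(x) = 1 - x` on `[0,1]`. -/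
def tauEx : Fin 2 → unitInterval → unitInterval :=
  ![fun x => x, unitInterval.symm]

/-- The holonomic probability `ν̂₀ = (δ_{(0,11w̄)} + δ_{(1,1w̄)})/2`. -/
def nuhatEx (wbar : ℕ → Fin 2) : Measure (unitInterval × (ℕ → Fin 2)) :=
  (2 : ENNReal)⁻¹ •
    (Measure.dirac ((0 : unitInterval), prepend 1 (prepend 1 wbar))
      + Measure.dirac ((1 : unitInterval), prepend 1 wbar))

lemma memBplus_const_one : MemBplus fun _ => 1 :=
  ⟨measurable_const, 1, 1, one_pos, fun _ => le_rfl, fun _ => le_rfl⟩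

lemma entropy_le_log {d : ℕ} (τ : Fin d → unitInterval → unitInterval)
    (ν : Measure (unitInterval × (ℕ → Fin d))) [IsProbabilityMeasure ν] :
    entropy τ ν ≤ Real.log d := by
  have hmem : Real.log d ∈ {r : ℝ | ∃ f : unitInterval → ℝ, MemBplus f ∧
      r = ∫ p, Real.log ((∑ i : Fin d, f (τ i p.1)) / f p.1) ∂ν} :=
    ⟨fun _ => 1, memBplus_const_one, by simp⟩
  by_cases hbdd : BddBelow {r : ℝ | ∃ f : unitInterval → ℝ, MemBplus f ∧
      r = ∫ p, Real.log ((∑ i : Fin d, f (τ i p.1)) / f p.1) ∂ν}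
  · exact csInf_le hbdd hmem
  · -- `sInf` of a set unbounded below is `0`
    rw [entropy, Real.sInf_of_not_bddBelow hbdd]
    exact Real.log_natCast_nonneg d

lemma integral_half_dirac_add_dirac {α : Type*} [MeasurableSpace α]
    [MeasurableSingletonClass α] (a b : α) (g : α → ℝ) :
    ∫ p, g p ∂((2 : ENNReal)⁻¹ • (Measure.dirac a + Measure.dirac b)) = (g a + g b) / 2 := by
  rw [integral_smul_measure,
    integral_add_measure ((integrable_const _).congr (ae_eq_dirac g).symm)
      ((integrable_const _).congr (ae_eq_dirac g).symm),
    integral_dirac, integral_dirac]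
  simp [ENNReal.toReal_inv]
  ring

lemma isProbabilityMeasure_nuhatEx (wbar : ℕ → Fin 2) : IsProbabilityMeasure (nuhatEx wbar) := by
  constructor
  simp only [nuhatEx, Measure.smul_apply, Measure.add_apply, measure_univ, smul_eq_mul]
  rw [← two_mul, mul_one, ENNReal.inv_mul_cancel two_ne_zero ENNReal.ofNat_ne_top]

lemma isHolonomic_nuhatEx (wbar : ℕ → Fin 2) : IsHolonomic tauEx (nuhatEx wbar) := by
  intro f
  rw [nuhatEx, integral_half_dirac_add_dirac, integral_half_dirac_add_dirac]
  change (f (unitInterval.symm 0) + f (unitInterval.symm 1)) / 2 = _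
  rw [unitInterval.symm_zero, unitInterval.symm_one, add_comm]

lemma integral_log_nuhatEx (wbar : ℕ → Fin 2) (f : unitInterval → ℝ) :
    ∫ p, Real.log ((∑ i : Fin 2, f (tauEx i p.1)) / f p.1) ∂(nuhatEx wbar)
      = (Real.log ((f 0 + f 1) / f 0) + Real.log ((f 0 + f 1) / f 1)) / 2 := by
  rw [nuhatEx, integral_half_dirac_add_dirac]
  simp [Fin.sum_univ_two, tauEx, add_comm (f 1)]

lemma log_two_le_half_add_log_add_div {a b : ℝ} (ha : 0 < a) (hb : 0 < b) :
    Real.log 2 ≤ (Real.log ((a + b) / a) + Real.log ((a + b) / b)) / 2 := by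
  have hprod : 2 ^ 2 ≤ (a + b) / a * ((a + b) / b) := by
    rw [div_mul_div_comm, le_div_iff₀ (by positivity)]
    nlinarith [sq_nonneg (a - b)]
  have hlog := Real.log_le_log (by norm_num) hprod
  rw [Real.log_pow, Real.log_mul (by positivity) (by positivity)] at hlog
  push_cast at hlog
  linarith

lemma entropy_nuhatEx (wbar : ℕ → Fin 2) : entropy tauEx (nuhatEx wbar) = Real.log 2 := by
  refine IsLeast.csInf_eq ⟨⟨fun _ => 1, memBplus_const_one, ?_⟩, ?_⟩
  · rw [integral_log_nuhatEx wbar fun _ => 1]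
    norm_num
  · rintro r ⟨f, ⟨-, c, -, hc, hcf, -⟩, rfl⟩
    rw [integral_log_nuhatEx]
    exact log_two_le_half_add_log_add_div (hc.trans_le (hcf 0)) (hc.trans_le (hcf 1))

theorem stmt15_general (wbar : ℕ → Fin 2) :
    entropy tauEx (nuhatEx wbar) = Real.log 2 ∧
    sSup {r : ℝ | ∃ nuhat : Measure (unitInterval × (ℕ → Fin 2)),
        IsProbabilityMeasure nuhat ∧ IsHolonomic tauEx nuhat ∧
        r = entropy tauEx nuhat}
      = Real.log 2 := by
  refine ⟨entropy_nuhatEx wbar, IsGreatest.csSup_eq ⟨?_, ?_⟩⟩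
  · exact ⟨nuhatEx wbar, isProbabilityMeasure_nuhatEx wbar, isHolonomic_nuhatEx wbar,
      (entropy_nuhatEx wbar).symm⟩
  · rintro r ⟨ν, hν, -, rfl⟩
    exact_mod_cast entropy_le_log tauEx ν

theorem stmt15 (wbar : ℕ → Fin 2) (hwbar : wbar ≠ fun _ => 1) :
    entropy tauEx (nuhatEx wbar) = Real.log 2 ∧
    sSup {r : ℝ | ∃ nuhat : Measure (unitInterval × (ℕ → Fin 2)),
        IsProbabilityMeasure nuhat ∧ IsHolonomic tauEx nuhat ∧
        r = entropy tauEx nuhat}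
      = Real.log 2 :=
  stmt15_general wbar
end
end
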